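/- arXiv:1105.1683 — 3 statements merged into one kernel-verified Lean document; each statement's English description precedes it below -/
import Mathlib

section
/- (Lovász Local Lemma / Dobrushin condition.) Let G = (V,E) be a locally finite simple graph and p ∈ [0,1]^V with q := 1 − p coordinatewise. If there exists a vector s ∈ (0,∞)^V such that for every v ∈ V one has q_v · Π_{w ∈ N⁺(v)} (1 + s_w) ≤ s_v, then Ξ_{G[W]}(p) > 0 for every finite W ⊆ V, i.e. p lies in the interior Shearer set of G. -/
open MeasureTheory Finset
open scoped Classical

/-- The critical function Ξ_{G[W]}(p). -/
noncomputable def Xi {V : Type*} (G : SimpleGraph V) (W : Finset V) (p : V → ℝ) : ℝ :=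
  ∑ T ∈ W.powerset,
    if ∀ u ∈ T, ∀ w ∈ T, ¬ G.Adj u w then ∏ v ∈ T, -(1 - p v) else 0

/-
Induction on `W`, carrying the stronger invariant `Ξ(W \ {v}) ≤ (1 + s v) Ξ(W)` for `v ∈ W`.
Deleting `v` gives `Ξ(W) = Ξ(A) - q_v Ξ(A \ N(v))` with `A = W \ {v}`; removing the neighbours
of `v` from `A` one at a time costs a factor `1 + s w` each by the invariant, so
`(1 + s v) Ξ(W) ≥ (1 + s v - q_v ∏_{N⁺(v)} (1 + s w)) Ξ(A) ≥ Ξ(A) > 0` by the hypothesis.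
-/

section
variable {V : Type*} (G : SimpleGraph V) (p : V → ℝ)

theorem Xi_empty : Xi G ∅ p = 1 := by
  simp [Xi]

variable [DecidableEq V]

lemma forall_not_adj_insert {v : V} {T : Finset V} :
    (∀ u ∈ insert v T, ∀ w ∈ insert v T, ¬ G.Adj u w) ↔
      (∀ w ∈ T, ¬ G.Adj v w) ∧ ∀ u ∈ T, ∀ w ∈ T, ¬ G.Adj u w := by
  simp only [mem_insert, forall_eq_or_imp, G.irrefl, not_false_eq_true, true_and]
  constructor
  · rintro ⟨hv, hT⟩
    exact ⟨hv, fun u hu w hw => (hT u hu).2 w hw⟩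
  · rintro ⟨hv, hT⟩
    exact ⟨hv, fun u hu => ⟨fun h => hv u hu h.symm, hT u hu⟩⟩

theorem Xi_eq_sub {W : Finset V} {v : V} (hv : v ∈ W) :
    Xi G W p = Xi G (W.erase v) p
      - (1 - p v) * Xi G ((W.erase v).filter (fun w => ¬ G.Adj v w)) p := by
  set A := W.erase v
  have hvA : v ∉ A := notMem_erase v W
  rw [← insert_erase hv, Xi, sum_powerset_insert hvA, Xi, Xi, sub_eq_add_neg,
    neg_mul_eq_neg_mul, mul_sum]
  congr 1
  rw [← sum_subset (powerset_mono.2 (filter_subset (fun w => ¬ G.Adj v w) A))]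
  · refine sum_congr rfl fun T hT => ?_
    have hTA : T ⊆ A := (mem_powerset.1 hT).trans (filter_subset _ _)
    have hTv : ∀ w ∈ T, ¬ G.Adj v w := fun w hw => (mem_filter.1 (mem_powerset.1 hT hw)).2
    simp only [forall_not_adj_insert, mul_ite, mul_zero, prod_insert fun h => hvA (hTA h)]
    exact if_congr (and_iff_right hTv) rfl rfl
  · intro T hTA hTB
    simp only [forall_not_adj_insert]
    exact if_neg fun h => hTB <| mem_powerset.2 fun w hw =>
      mem_filter.2 ⟨mem_powerset.1 hTA hw, h.1 w hw⟩

variable {G p} {s : V → ℝ}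

theorem Xi_sdiff_le_prod_mul (hs : ∀ v, 0 ≤ s v) {A S : Finset V} (hSA : S ⊆ A)
    (hA : ∀ U ⊆ A, ∀ v ∈ U, Xi G (U.erase v) p ≤ (1 + s v) * Xi G U p) :
    Xi G (A \ S) p ≤ (∏ w ∈ S, (1 + s w)) * Xi G A p := by
  induction S using Finset.induction_on with
  | empty => simp
  | insert w S hwS ih =>
    obtain ⟨hwA, hSA⟩ := insert_subset_iff.1 hSA
    rw [sdiff_insert, prod_insert hwS, mul_assoc]
    calc Xi G ((A \ S).erase w) p ≤ (1 + s w) * Xi G (A \ S) p :=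
          hA _ sdiff_subset w (mem_sdiff.2 ⟨hwA, hwS⟩)
      _ ≤ (1 + s w) * ((∏ x ∈ S, (1 + s x)) * Xi G A p) := by
          gcongr
          · linarith [hs w]
          · exact ih hSA

theorem Xi_erase_le_mul {N : Finset V} {W : Finset V} {v : V} (hv : v ∈ W)
    (hN : G.neighborSet v ⊆ N) (hpv : p v ≤ 1) (hs : ∀ v, 0 ≤ s v)
    (hcond : (1 - p v) * ∏ w ∈ insert v N, (1 + s w) ≤ s v)
    (hA : ∀ U ⊆ W.erase v, ∀ u ∈ U, Xi G (U.erase u) p ≤ (1 + s u) * Xi G U p)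
    (hpos : 0 ≤ Xi G (W.erase v) p) :
    Xi G (W.erase v) p ≤ (1 + s v) * Xi G W p := by
  set A := W.erase v
  set F := A.filter (G.Adj v)
  have hvF : v ∉ F := fun h => G.irrefl (mem_filter.1 h).2
  have hFN : F ⊆ N := fun w hw => hN (mem_filter.1 hw).2
  have hq : 0 ≤ 1 - p v := by linarith
  have hprod : (1 + s v) * ∏ w ∈ F, (1 + s w) ≤ ∏ w ∈ insert v N, (1 + s w) := by
    rw [← prod_insert (f := fun w => 1 + s w) hvF]
    exact prod_le_prod_of_subset_of_one_le (insert_subset_insert v hFN)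
      (fun w _ => by linarith [hs w]) (fun w _ _ => by linarith [hs w])
  have hcondF : (1 - p v) * ((1 + s v) * ∏ w ∈ F, (1 + s w)) ≤ s v :=
    (mul_le_mul_of_nonneg_left hprod hq).trans hcond
  have hXiF : Xi G (A \ F) p ≤ (∏ w ∈ F, (1 + s w)) * Xi G A p :=
    Xi_sdiff_le_prod_mul hs (filter_subset _ _) hA
  rw [Xi_eq_sub G p hv, filter_not]
  linarith [mul_le_mul_of_nonneg_right hcondF hpos,
    mul_le_mul_of_nonneg_left hXiF (mul_nonneg hq (by linarith [hs v] : (0 : ℝ) ≤ 1 + s v))]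

theorem Xi_pos_and_erase_le (N : V → Finset V) (hN : ∀ v, G.neighborSet v ⊆ N v)
    (hp : ∀ v, p v ≤ 1) (hs : ∀ v, 0 ≤ s v)
    (hcond : ∀ v, (1 - p v) * ∏ w ∈ insert v (N v), (1 + s w) ≤ s v) (W : Finset V) :
    0 < Xi G W p ∧ ∀ v ∈ W, Xi G (W.erase v) p ≤ (1 + s v) * Xi G W p := by
  induction W using Finset.strongInduction with
  | H W ih =>
    have hstep : ∀ v ∈ W, Xi G (W.erase v) p ≤ (1 + s v) * Xi G W p := fun v hv =>
      Xi_erase_le_mul hv (hN v) (hp v) hs (hcond v)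
        (fun U hU => (ih U (hU.trans_lt (erase_ssubset hv))).2)
        (ih _ (erase_ssubset hv)).1.le
    refine ⟨?_, hstep⟩
    obtain rfl | ⟨v, hv⟩ := W.eq_empty_or_nonempty
    · simp [Xi_empty]
    · exact pos_of_mul_pos_right ((ih _ (erase_ssubset hv)).1.trans_le (hstep v hv))
        (by linarith [hs v])
end

/-- the Lovász Local Lemma / Dobrushin condition implies that
p lies in the interior Shearer set. -/
theorem stmt4 {V : Type*} [DecidableEq V] (G : SimpleGraph V)
    (hlf : ∀ v : V, (G.neighborSet v).Finite)
    (p : V → ℝ) (hp : ∀ v, p v ∈ Set.Icc (0:ℝ) 1)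
    (s : V → ℝ) (hs : ∀ v, 0 < s v)
    (hcond : ∀ v : V,
      (1 - p v) * ∏ w ∈ insert v (hlf v).toFinset, (1 + s w) ≤ s v) :
    ∀ W : Finset V, 0 < Xi G W p :=
  fun W => (Xi_pos_and_erase_le (fun v => (hlf v).toFinset) (fun v => (hlf v).coe_toFinset.ge)
    (fun v => (hp v).2) (fun v => (hs v).le) hcond W).1
end

section
/- Let G = (V,E) be a finite simple graph, p ∈ [0,1]^V in the Shearer set of G, W ⊆ V and v ∈ V ∖ W with Ξ_{G[W]}(p) > 0. Then the one-vertex open extension probability satisfies Θ_{W,v}(p) := Ξ_{G[W∪{v}]}(p) / Ξ_{G[W]}(p) ≤ p_v. -/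
/-!
Splitting the independent sets of `G[W ∪ {v}]` according to whether they contain `v` gives
`Ξ(W ∪ {v}) = Ξ(W) - q_v Ξ(W ∖ N(v))`. On the Shearer set the last term is nonnegative, so `Ξ` is
antitone under inclusion; hence `Ξ(W ∖ N(v)) ≥ Ξ(W)` and `Ξ(W ∪ {v}) ≤ (1 - q_v) Ξ(W) = p_v Ξ(W)`.
-/

open MeasureTheory Finset
open scoped Classical

section

variable {V : Type*} [DecidableEq V] (G : SimpleGraph V) (p : V → ℝ)

lemma forall_not_adj_insert_iff (v : V) (T : Finset V) :
    (∀ u ∈ insert v T, ∀ w ∈ insert v T, ¬ G.Adj u w) ↔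
      (∀ u ∈ T, ¬ G.Adj v u) ∧ ∀ u ∈ T, ∀ w ∈ T, ¬ G.Adj u w := by
  simp only [forall_mem_insert, G.irrefl, not_false_eq_true, true_and, G.adj_comm _ v]
  exact ⟨fun h => ⟨h.1, fun u hu => (h.2 u hu).2⟩,
    fun h => ⟨h.1, fun u hu => ⟨h.1 u hu, h.2 u hu⟩⟩⟩

lemma Xi_insert {W : Finset V} {v : V} (hv : v ∉ W) :
    Xi G (insert v W) p = Xi G W p - (1 - p v) * Xi G {u ∈ W | ¬ G.Adj v u} p := by
  have hsub : {u ∈ W | ¬ G.Adj v u}.powerset ⊆ W.powerset :=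
    powerset_mono.2 (filter_subset _ _)
  rw [Xi, sum_powerset_insert hv, Xi, Xi, mul_sum, sub_eq_add_neg, ← sum_neg_distrib]
  congr 1
  symm
  apply sum_subset_zero_on_sdiff hsub
  · intro T hT
    obtain ⟨hTW, u, hu, hvu⟩ := by simpa [subset_iff] using hT
    rw [if_neg fun h => ((forall_not_adj_insert_iff G v T).1 h).1 u hu (hvu (hTW hu))]
  · intro T hT
    have hvT : v ∉ T := fun h => hv (mem_powerset.1 (hsub hT) h)
    have hTv : ∀ u ∈ T, ¬ G.Adj v u := fun u hu => (mem_filter.1 (mem_powerset.1 hT hu)).2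
    simp only [forall_not_adj_insert_iff, and_iff_right hTv, prod_insert hvT]
    split_ifs <;> ring

lemma Xi_antitone (hp : ∀ v, p v ≤ 1) (hShearer : ∀ W : Finset V, 0 ≤ Xi G W p) :
    Antitone fun W => Xi G W p := by
  refine antitone_iff_forall_insert_le.2 fun W v hv => ?_
  have hdrop := mul_nonneg (sub_nonneg.2 (hp v)) (hShearer {u ∈ W | ¬ G.Adj v u})
  simp only [Xi_insert G p hv]
  linarith

end

theorem stmt11_general {V : Type*} [DecidableEq V] (G : SimpleGraph V)
    (p : V → ℝ) (hp : ∀ v, p v ∈ Set.Icc (0:ℝ) 1)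
    (hShearer : ∀ W : Finset V, 0 ≤ Xi G W p)
    (W : Finset V) (v : V) (hv : v ∉ W) (hW : 0 < Xi G W p) :
    Xi G (insert v W) p / Xi G W p ≤ p v := by
  have hp_le : ∀ v, p v ≤ 1 := fun v => (hp v).2
  have hmono : Xi G W p ≤ Xi G {u ∈ W | ¬ G.Adj v u} p :=
    Xi_antitone G p hp_le hShearer (filter_subset _ W)
  have hscaled := mul_le_mul_of_nonneg_left hmono (sub_nonneg.2 (hp_le v))
  rw [div_le_iff₀ hW, Xi_insert G p hv]
  linarith

/-- the one-vertex open extension probability is at most p_v. -/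
theorem stmt11 {V : Type*} [Fintype V] [DecidableEq V] (G : SimpleGraph V)
    (p : V → ℝ) (hp : ∀ v, p v ∈ Set.Icc (0:ℝ) 1)
    (hShearer : ∀ W : Finset V, 0 ≤ Xi G W p)
    (W : Finset V) (v : V) (hv : v ∉ W) (hW : 0 < Xi G W p) :
    Xi G (insert v W) p / Xi G W p ≤ p v :=
  stmt11_general G p hp hShearer W v hv hW
end

section
/- Let G = (V,E) be a finite simple graph and p ∈ [0,1]^V with p_v > 0 for all v and p in the Shearer set of G. Let W ⊆ U ⊆ V and v ∈ V ∖ U, and suppose Ξ_{G[W]}(p) > 0 and Ξ_{G[U]}(p) > 0. Then the one-vertex open extension probabilities satisfy Θ_{U,v}(p) ≤ Θ_{W,v}(p), i.e. Ξ_{G[U∪{v}]}(p) / Ξ_{G[U]}(p) ≤ Ξ_{G[W∪{v}]}(p) / Ξ_{G[W]}(p): the one-vertex open extension probability decreases as the conditioning set increases. -/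
open MeasureTheory Finset
open scoped Classical

/-!
Splitting the independent sets of `S ∪ {u}` by whether they contain `u` gives the recursion
`Ξ(S ∪ {u}) = Ξ(S) - q_u Ξ(S ∖ N(u))`, so on the Shearer set `Ξ` is antitone. The theorem is the
cross-multiplied inequality `Ξ(W) Ξ(U ∪ {u}) ≤ Ξ(U) Ξ(W ∪ {u})`, proved by strong induction on `U`:
remove one vertex `w ∈ U ∖ W` to get `M`, compare `M` with `U = M ∪ {w}` through the recursion at `u`
(using the induction hypothesis for `M ∖ N(u) ⊆ M` and the vertex `w` when `u ≁ w`), and chain the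
result with the induction hypothesis for `W ⊆ M`.
-/

namespace Xi

variable {V : Type*} (G : SimpleGraph V) (p : V → ℝ)

def IsShearer : Prop := ∀ W : Finset V, 0 ≤ Xi G W p

lemma filter_eq_sum (S : Finset V) (P : V → Prop) [DecidablePred P] :
    Xi G (S.filter P) p =
      ∑ T ∈ S.powerset,
        if (∀ u ∈ T, ∀ w ∈ T, ¬ G.Adj u w) ∧ ∀ w ∈ T, P w then ∏ w ∈ T, -(1 - p w) else 0 := by
  calc Xi G (S.filter P) p
      = ∑ T ∈ (S.filter P).powerset,
          if (∀ u ∈ T, ∀ w ∈ T, ¬ G.Adj u w) ∧ ∀ w ∈ T, P w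
          then ∏ w ∈ T, -(1 - p w) else 0 := by
        refine sum_congr rfl fun T hT => ?_
        have hP : ∀ w ∈ T, P w := fun w hw => (mem_filter.1 (mem_powerset.1 hT hw)).2
        simp only [and_iff_left hP]
    _ = _ := by
        refine sum_subset (powerset_mono.2 (filter_subset P S)) fun T hTS hTP => if_neg ?_
        rintro ⟨-, hP⟩
        exact hTP (mem_powerset.2 fun w hw => mem_filter.2 ⟨mem_powerset.1 hTS hw, hP w hw⟩)

variable [DecidableEq V]

lemma insert_eq (S : Finset V) {v : V} (hv : v ∉ S) :
    Xi G (insert v S) p = Xi G S p - (1 - p v) * Xi G (S.filter (¬ G.Adj v ·)) p := by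
  have hterm : ∀ T ∈ S.powerset,
      (if ∀ u ∈ insert v T, ∀ w ∈ insert v T, ¬ G.Adj u w
        then ∏ w ∈ insert v T, -(1 - p w) else 0)
      = -(1 - p v) * (if (∀ u ∈ T, ∀ w ∈ T, ¬ G.Adj u w) ∧ ∀ w ∈ T, ¬ G.Adj v w
          then ∏ w ∈ T, -(1 - p w) else 0) := by
    intro T hT
    have hvT : v ∉ T := fun h => hv (mem_powerset.1 hT h)
    have hindep : (∀ u ∈ insert v T, ∀ w ∈ insert v T, ¬ G.Adj u w) ↔
        (∀ u ∈ T, ∀ w ∈ T, ¬ G.Adj u w) ∧ ∀ w ∈ T, ¬ G.Adj v w := by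
      simp only [mem_insert, forall_eq_or_imp, SimpleGraph.irrefl, not_false_eq_true, true_and,
        G.adj_comm _ v, imp_and, forall_and]
      tauto
    simp only [hindep, prod_insert hvT, mul_ite, mul_zero]
  rw [sub_eq_add_neg, ← neg_mul]
  conv_lhs => rw [Xi, sum_powerset_insert hv, sum_congr rfl hterm, ← mul_sum, ← filter_eq_sum]
  rfl

variable {G p}

lemma insert_le (hp : IsShearer G p) {S : Finset V} {v : V} (hv : v ∉ S) (hpv : p v ≤ 1) :
    Xi G (insert v S) p ≤ Xi G S p := by
  rw [insert_eq G p S hv]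
  have := mul_nonneg (sub_nonneg.2 hpv) (hp (S.filter (¬ G.Adj v ·)))
  linarith

lemma mul_insert_insert_le (hp : IsShearer G p) (hp1 : ∀ v, p v ≤ 1) {M : Finset V} {u w : V}
    (hwM : w ∉ M) (hu : u ∉ insert w M)
    (hM : ¬ G.Adj u w → Xi G (M.filter (¬ G.Adj u ·)) p * Xi G (insert w M) p ≤
      Xi G M p * Xi G (insert w (M.filter (¬ G.Adj u ·))) p) :
    Xi G M p * Xi G (insert u (insert w M)) p ≤ Xi G (insert w M) p * Xi G (insert u M) p := by
  have huM : u ∉ M := fun h => hu (mem_insert_of_mem h)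
  have hqu : 0 ≤ 1 - p u := sub_nonneg.2 (hp1 u)
  rw [insert_eq G p _ hu, insert_eq G p _ huM, filter_insert]
  by_cases hadj : G.Adj u w
  · have hmono := insert_le hp hwM (hp1 w)
    have h0 := hp (M.filter (¬ G.Adj u ·))
    rw [if_neg (not_not.2 hadj)]
    nlinarith [mul_le_mul_of_nonneg_left hmono (mul_nonneg hqu h0)]
  · rw [if_pos hadj]
    nlinarith [mul_le_mul_of_nonneg_left (hM hadj) hqu]

theorem mul_insert_le_mul_insert (hp : IsShearer G p) (hp1 : ∀ v, p v ≤ 1) (U : Finset V) :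
    ∀ W ⊆ U, ∀ u ∉ U, Xi G W p * Xi G (insert u U) p ≤ Xi G U p * Xi G (insert u W) p := by
  induction U using Finset.strongInduction with
  | H U ih =>
  intro W hWU u hu
  obtain rfl | hWU' := hWU.eq_or_ssubset
  · exact le_rfl
  obtain ⟨w, hwU, hwW⟩ := exists_of_ssubset hWU'
  set M := U.erase w
  have hUM : U = insert w M := (insert_erase hwU).symm
  have hMU : M ⊂ U := erase_ssubset hwU
  have hwM : w ∉ M := notMem_erase w U
  have huM : u ∉ M := fun h => hu (erase_subset w U h)
  have hWM : W ⊆ M := fun x hx => mem_erase.2 ⟨fun h => hwW (h ▸ hx), hWU hx⟩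
  have hstep : Xi G M p * Xi G (insert u U) p ≤ Xi G U p * Xi G (insert u M) p := by
    rw [hUM] at hu ⊢
    exact mul_insert_insert_le hp hp1 hwM hu fun _ =>
      ih M hMU _ (filter_subset _ M) w hwM
  have hWstep := ih M hMU W hWM u huM
  rcases (hp M).eq_or_lt with hM0 | hMpos
  · -- `Ξ` is antitone, so `Ξ(M) = 0` forces both `Ξ(U)` and `Ξ(U ∪ {u})` to vanish.
    have hU0 : Xi G U p = 0 :=
      le_antisymm (hM0 ▸ hUM ▸ insert_le hp hwM (hp1 w)) (hp U)
    have huU0 : Xi G (insert u U) p = 0 :=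
      le_antisymm (hU0 ▸ insert_le hp hu (hp1 u)) (hp _)
    rw [hU0, huU0, mul_zero, zero_mul]
  · refine le_of_mul_le_mul_left ?_ hMpos
    calc Xi G M p * (Xi G W p * Xi G (insert u U) p)
        = Xi G W p * (Xi G M p * Xi G (insert u U) p) := by ring
      _ ≤ Xi G W p * (Xi G U p * Xi G (insert u M) p) :=
          mul_le_mul_of_nonneg_left hstep (hp W)
      _ = Xi G U p * (Xi G W p * Xi G (insert u M) p) := by ring
      _ ≤ Xi G U p * (Xi G M p * Xi G (insert u W) p) :=
          mul_le_mul_of_nonneg_left hWstep (hp U)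
      _ = Xi G M p * (Xi G U p * Xi G (insert u W) p) := by ring

end Xi

theorem stmt13_general {V : Type*} [DecidableEq V] (G : SimpleGraph V)
    (p : V → ℝ) (hp1 : ∀ v, p v ≤ 1)
    (hShearer : ∀ W : Finset V, 0 ≤ Xi G W p)
    (W U : Finset V) (hWU : W ⊆ U) (v : V) (hv : v ∉ U)
    (hW : 0 < Xi G W p) (hU : 0 < Xi G U p) :
    Xi G (insert v U) p / Xi G U p ≤ Xi G (insert v W) p / Xi G W p := by
  rw [div_le_div_iff₀ hU hW, mul_comm, mul_comm (Xi G (insert v W) p)]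
  exact Xi.mul_insert_le_mul_insert hShearer hp1 U W hWU v hv

/-- one-vertex open extension probabilities decrease as the
conditioning set increases. -/
theorem stmt13 {V : Type*} [Fintype V] [DecidableEq V] (G : SimpleGraph V)
    (p : V → ℝ) (hp0 : ∀ v, 0 < p v) (hp1 : ∀ v, p v ≤ 1)
    (hShearer : ∀ W : Finset V, 0 ≤ Xi G W p)
    (W U : Finset V) (hWU : W ⊆ U) (v : V) (hv : v ∉ U)
    (hW : 0 < Xi G W p) (hU : 0 < Xi G U p) :
    Xi G (insert v U) p / Xi G U p ≤ Xi G (insert v W) p / Xi G W p :=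
  stmt13_general G p hp1 hShearer W U hWU v hv hW hU
end
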